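/- The 6-dimensional real Lie algebra s' with basis e₁,...,e₆ and nonzero brackets [e₁,e₃]=-e₃, [e₁,e₄]=e₄, [e₁,e₅]=-e₅, [e₁,e₆]=e₆, [e₂,e₅]=e₃, [e₂,e₆]=e₄, [e₅,e₆]=e₂ satisfies the Jacobi identity and is solvable with derived series dimensions (6,5,3,0). -/
import Mathlib


/-- the bracket of the 6-dimensional algebra `s'` (basis `e₁,...,e₆ ↦` indices `0,...,5`)
with nonzero brackets `[e₁,e₃]=-e₃, [e₁,e₄]=e₄, [e₁,e₅]=-e₅, [e₁,e₆]=e₆, [e₂,e₅]=e₃,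
[e₂,e₆]=e₄, [e₅,e₆]=e₂`, extended bilinearly and antisymmetrically. -/
def br11 (x y : Fin 6 → ℝ) : Fin 6 → ℝ := fun i =>
  (if i = 1 then (x 4 * y 5 - x 5 * y 4) else 0) +
  (if i = 2 then -(x 0 * y 2 - x 2 * y 0) + (x 1 * y 4 - x 4 * y 1) else 0) +
  (if i = 3 then (x 0 * y 3 - x 3 * y 0) + (x 1 * y 5 - x 5 * y 1) else 0) +
  (if i = 4 then -(x 0 * y 4 - x 4 * y 0) else 0) +
  (if i = 5 then (x 0 * y 5 - x 5 * y 0) else 0)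

/-- the derived subalgebra `[s',s']` -/
def D11_1 : Submodule ℝ (Fin 6 → ℝ) :=
  Submodule.span ℝ {z | ∃ x y, z = br11 x y}

/-- the second derived subalgebra -/
def D11_2 : Submodule ℝ (Fin 6 → ℝ) :=
  Submodule.span ℝ {z | ∃ x ∈ D11_1, ∃ y ∈ D11_1, z = br11 x y}

noncomputable def f1 : (Fin 6 → ℝ) →ₗ[ℝ] ℝ := LinearMap.proj 0

noncomputable def f2 : (Fin 6 → ℝ) →ₗ[ℝ] (Fin 3 → ℝ) :=
  LinearMap.pi fun j => LinearMap.proj (![0, 4, 5] j)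

lemma single1_mem : (Pi.single 1 1 : Fin 6 → ℝ) ∈ D11_1 := by
  apply Submodule.subset_span
  refine ⟨Pi.single 4 1, Pi.single 5 1, ?_⟩
  funext i; fin_cases i <;> simp [br11, Pi.single_apply]

lemma single2_mem : (Pi.single 2 1 : Fin 6 → ℝ) ∈ D11_1 := by
  apply Submodule.subset_span
  refine ⟨Pi.single 1 1, Pi.single 4 1, ?_⟩
  funext i; fin_cases i <;> simp [br11, Pi.single_apply]

lemma single3_mem : (Pi.single 3 1 : Fin 6 → ℝ) ∈ D11_1 := by
  apply Submodule.subset_span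
  refine ⟨Pi.single 1 1, Pi.single 5 1, ?_⟩
  funext i; fin_cases i <;> simp [br11, Pi.single_apply]

lemma single4_mem : (Pi.single 4 1 : Fin 6 → ℝ) ∈ D11_1 := by
  apply Submodule.subset_span
  refine ⟨Pi.single 4 1, Pi.single 0 1, ?_⟩
  funext i; fin_cases i <;> simp [br11, Pi.single_apply]

lemma single5_mem : (Pi.single 5 1 : Fin 6 → ℝ) ∈ D11_1 := by
  apply Submodule.subset_span
  refine ⟨Pi.single 0 1, Pi.single 5 1, ?_⟩
  funext i; fin_cases i <;> simp [br11, Pi.single_apply]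

lemma D1_eq : D11_1 = LinearMap.ker f1 := by
  apply le_antisymm
  · rw [D11_1, Submodule.span_le]
    rintro z ⟨x, y, rfl⟩
    simp [f1, br11]
  · intro x hx
    have hx0 : x 0 = 0 := hx
    have hrep : x = x 1 • (Pi.single 1 1 : Fin 6 → ℝ) + x 2 • (Pi.single 2 1 : Fin 6 → ℝ) + x 3 • (Pi.single 3 1 : Fin 6 → ℝ)
        + x 4 • (Pi.single 4 1 : Fin 6 → ℝ) + x 5 • (Pi.single 5 1 : Fin 6 → ℝ) := by
      funext i; fin_cases i <;> simp [Pi.single_apply, hx0]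
    rw [hrep]
    exact add_mem (add_mem (add_mem (add_mem
      (Submodule.smul_mem _ _ single1_mem) (Submodule.smul_mem _ _ single2_mem))
      (Submodule.smul_mem _ _ single3_mem)) (Submodule.smul_mem _ _ single4_mem))
      (Submodule.smul_mem _ _ single5_mem)

lemma D2_eq : D11_2 = LinearMap.ker f2 := by
  apply le_antisymm
  · rw [D11_2, Submodule.span_le]
    rintro z ⟨x, hx, y, hy, rfl⟩
    rw [D1_eq] at hx hy
    have hx0 : x 0 = 0 := hx
    have hy0 : y 0 = 0 := hy
    ext j; fin_cases j <;> simp [f2, br11, hx0, hy0]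
  · intro x hx
    have h : ∀ j : Fin 3, f2 x j = 0 := fun j => congrFun hx j
    have hx0 : x 0 = 0 := h 0
    have hx4 : x 4 = 0 := h 1
    have hx5 : x 5 = 0 := h 2
    have hrep : x = x 1 • (Pi.single 1 1 : Fin 6 → ℝ) + x 2 • (Pi.single 2 1 : Fin 6 → ℝ) + x 3 • (Pi.single 3 1 : Fin 6 → ℝ) := by
      funext i; fin_cases i <;> simp [Pi.single_apply, hx0, hx4, hx5]
    have m1 : (Pi.single 1 1 : Fin 6 → ℝ) ∈ D11_2 := by
      apply Submodule.subset_span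
      refine ⟨Pi.single 4 1, single4_mem, Pi.single 5 1, single5_mem, ?_⟩
      funext i; fin_cases i <;> simp [br11, Pi.single_apply]
    have m2 : (Pi.single 2 1 : Fin 6 → ℝ) ∈ D11_2 := by
      apply Submodule.subset_span
      refine ⟨Pi.single 1 1, single1_mem, Pi.single 4 1, single4_mem, ?_⟩
      funext i; fin_cases i <;> simp [br11, Pi.single_apply]
    have m3 : (Pi.single 3 1 : Fin 6 → ℝ) ∈ D11_2 := by
      apply Submodule.subset_span
      refine ⟨Pi.single 1 1, single1_mem, Pi.single 5 1, single5_mem, ?_⟩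
      funext i; fin_cases i <;> simp [br11, Pi.single_apply]
    rw [hrep]
    exact add_mem (add_mem (Submodule.smul_mem _ _ m1) (Submodule.smul_mem _ _ m2))
      (Submodule.smul_mem _ _ m3)

/-- the 6-dimensional algebra `s'` satisfies the Jacobi identity and is
solvable with derived series dimensions `(6,5,3,0)`. -/
theorem submaximal_cprojective_stmt11 :
    (∀ x y, br11 x y = - br11 y x) ∧
    (∀ x y z, br11 (br11 x y) z + br11 (br11 y z) x + br11 (br11 z x) y = 0) ∧
    Module.finrank ℝ (Fin 6 → ℝ) = 6 ∧
    Module.finrank ℝ D11_1 = 5 ∧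
    Module.finrank ℝ D11_2 = 3 ∧
    (∀ x ∈ D11_2, ∀ y ∈ D11_2, br11 x y = 0) := by
  have hfr : Module.finrank ℝ (Fin 6 → ℝ) = 6 := by simp
  refine ⟨?_, ?_, hfr, ?_, ?_, ?_⟩
  · intro x y
    funext i; fin_cases i <;> simp [br11] <;> ring
  · intro x y z
    funext i; fin_cases i <;> simp [br11] <;> ring
  · have hsurj : Function.Surjective f1 := fun c => ⟨fun _ => c, rfl⟩
    have := LinearMap.finrank_range_add_finrank_ker f1
    rw [LinearMap.range_eq_top.mpr hsurj, hfr] at this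
    simp at this
    rw [D1_eq]
    omega
  · have hsurj : Function.Surjective f2 := by
      intro v
      refine ⟨fun i => if i = 0 then v 0 else if i = 4 then v 1 else if i = 5 then v 2 else 0, ?_⟩
      funext j; fin_cases j <;> simp [f2]
    have := LinearMap.finrank_range_add_finrank_ker f2
    rw [LinearMap.range_eq_top.mpr hsurj, hfr] at this
    simp at this
    rw [D2_eq]
    omega
  · intro x hx y hy
    rw [D2_eq] at hx hy
    have hX : ∀ j : Fin 3, f2 x j = 0 := fun j => congrFun hx j
    have hY : ∀ j : Fin 3, f2 y j = 0 := fun j => congrFun hy j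
    have hx0 : x 0 = 0 := hX 0
    have hx4 : x 4 = 0 := hX 1
    have hx5 : x 5 = 0 := hX 2
    have hy0 : y 0 = 0 := hY 0
    have hy4 : y 4 = 0 := hY 1
    have hy5 : y 5 = 0 := hY 2
    funext i; fin_cases i <;> simp [br11, hx0, hx4, hx5, hy0, hy4, hy5]
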